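/- arXiv:2503.19539 — 12 statements merged into one kernel-verified Lean document; each statement's English description precedes it below -/
import Mathlib

section
/- Fix reals V, t, H, L with t > 0, 0 < L < H, H − L < 2t and V − t − H > 0, and set x̲ = 1 − (H−L)/(2t). Let x** = max{x̲, 1/2}. Then x** ∈ [x̲,1], x** ≤ max{x̲, 1/2, 1 − x̲·(H−L)/L}, and there exist payments (m, m₁) such that the threshold mechanism with threshold x** satisfies constraints (IC2), (IC1a), (IC1b) and (IR) (obedience is not required), and its revenue x̲·m₁ + ∫_{x̲}^{1} m(x) dx is greater than or equal to the revenue of every reduced mechanism satisfying (IC2), (IC1a), (IC1b) and (IR). -/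
/-!
Write `u x = U(y x, x) - m x` for the rent of a second-segment consumer. By (IC2), `-t (2 y x - 1)`
is a subgradient of `u` at `x`, so `u` is `t`-Lipschitz and an integration by parts gives
`∫ m = (1 - x̲)(V - t - L) + (1 - x̲) u x̲ - 2 ∫ u`. (IC1a) at `x̲` caps `m₁` by the first-segment
surplus minus `u x̲`, and since `u ≥ 0` falls at rate at most `t`,
`∫ u ≥ (s - x̲) u x̲ - t (s - x̲)² / 2` for every `s ∈ [x̲, 1]`. At `s = max x̲ (1/2)` the resulting
bound no longer depends on the mechanism: it is the revenue of the threshold mechanism with that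
threshold, whose payments are `V - L - t s` up to `s` and `V - t - L` beyond it.
-/

open MeasureTheory Set intervalIntegral

/-- Boundary of the first segment: `x̲ = 1 - (H-L)/(2t)`. -/
noncomputable def xlow (t H L : ℝ) : ℝ := 1 - (H - L) / (2 * t)

/-- Second-segment consumer utility `U(y', x)`. -/
noncomputable def secU (V t L y x : ℝ) : ℝ :=
  y * (V - x * t - L) + (1 - y) * ((V - t) - (1 - x) * t - L)

/-- Utility of the first-segment consumer located at `x̲` under allocation `y'`. -/
noncomputable def firstW (V t H L y : ℝ) : ℝ :=
  y * (V - xlow t H L * t - L) + (1 - y) * (V - xlow t H L * t - H)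

/-- Feasibility without the obedience constraint: constraints (IC2), (IC1a), (IC1b), (IR). -/
def FeasibleNoOB (V t H L : ℝ) (y m : ℝ → ℝ) (m₁ : ℝ) : Prop :=
  Measurable y ∧
  (∀ x ∈ Icc (xlow t H L) 1, y x ∈ Icc (0 : ℝ) 1) ∧
  Measurable m ∧
  IntervalIntegrable m volume (xlow t H L) 1 ∧
  -- (IC2)
  (∀ x ∈ Icc (xlow t H L) 1, ∀ x' ∈ Icc (xlow t H L) 1,
    secU V t L (y x) x - m x ≥ secU V t L (y x') x - m x') ∧
  -- (IC1a)
  (∀ x' ∈ Icc (xlow t H L) 1,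
    (V - xlow t H L * t - H) - m₁ ≥ firstW V t H L (y x') - m x') ∧
  -- (IC1b)
  (∀ x ∈ Icc (xlow t H L) 1,
    secU V t L (y x) x - m x ≥ (V - x * t - H) - m₁) ∧
  -- (IR)
  (∀ x ∈ Icc (xlow t H L) 1, secU V t L (y x) x - m x ≥ 0) ∧
  ((V - xlow t H L * t - H) - m₁ ≥ 0)

/-- Broker revenue of a reduced mechanism. -/
noncomputable def Revenue (t H L : ℝ) (m : ℝ → ℝ) (m₁ : ℝ) : ℝ :=
  xlow t H L * m₁ + ∫ x in (xlow t H L)..1, m x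

open scoped NNReal

section Subgradient

variable {u g : ℝ → ℝ}

lemma lipschitzOnWith_of_subgradient {S : Set ℝ} {K : ℝ≥0} (hg : ∀ x ∈ S, |g x| ≤ K)
    (hsub : ∀ p ∈ S, ∀ q ∈ S, u q + g q * (p - q) ≤ u p) : LipschitzOnWith K u S := by
  refine LipschitzOnWith.of_dist_le_mul fun p hp q hq => ?_
  rw [Real.dist_eq, Real.dist_eq, abs_le]
  have hgp := abs_le.mp (hg p hp)
  have hgq := abs_le.mp (hg q hq)
  have hpq := hsub p hp q hq
  have hqp := hsub q hq p hp
  constructor <;> cases abs_cases (p - q) <;> nlinarith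

lemma hasDerivAt_unique_of_subgradient {S : Set ℝ} {x u' : ℝ} (hS : S ∈ nhds x)
    (hsub : ∀ p ∈ S, u x + g x * (p - x) ≤ u p) (hu : HasDerivAt u u' x) : u' = g x := by
  have hmin : IsLocalMin (fun p => u p - g x * (p - x)) x :=
    Filter.mem_of_superset hS fun p hp => by
      simpa using le_sub_iff_add_le.mpr (hsub p hp)
  have hd : HasDerivAt (fun p => u p - g x * (p - x)) (u' - g x) x := by
    simpa using hu.fun_sub (((hasDerivAt_id x).sub_const x).const_mul (g x))
  exact sub_eq_zero.mp (hmin.hasDerivAt_eq_zero hd)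

lemma integral_sub_mul_subgradient {a b : ℝ} {K : ℝ≥0} (hab : a ≤ b)
    (hg : ∀ x ∈ Icc a b, |g x| ≤ K)
    (hsub : ∀ p ∈ Icc a b, ∀ q ∈ Icc a b, u q + g q * (p - q) ≤ u p) :
    ∫ x in a..b, (x - b) * g x = (b - a) * u a - ∫ x in a..b, u x := by
  have hu : AbsolutelyContinuousOnInterval u a b :=
    (uIcc_of_le hab ▸ lipschitzOnWith_of_subgradient hg hsub).absolutelyContinuousOnInterval
  have hline : AbsolutelyContinuousOnInterval (fun x => x - b) a b :=
    (contDiff_id.sub contDiff_const).contDiffOn.absolutelyContinuousOnInterval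
  have hderiv : ∀ᵐ x, x ∈ uIoc a b → (x - b) * g x = (x - b) * deriv u x := by
    filter_upwards [hu.ae_differentiableAt, Measure.ae_ne volume b] with x hdiff hxb hx
    rw [uIoc_of_le hab] at hx
    have hxI : x ∈ Ioo a b := ⟨hx.1, lt_of_le_of_ne hx.2 hxb⟩
    rw [hasDerivAt_unique_of_subgradient (Icc_mem_nhds hxI.1 hxI.2)
      (fun p hp => hsub p hp x (Ioo_subset_Icc_self hxI))
      (hdiff (uIoc_subset_uIcc (uIoc_of_le hab ▸ hx))).hasDerivAt]
  rw [integral_congr_ae hderiv, hline.integral_mul_deriv_eq_deriv_mul hu]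
  simp only [sub_self, zero_mul, zero_sub, differentiableAt_fun_id, differentiableAt_const,
    deriv_fun_sub, deriv_id'', deriv_const', sub_zero, one_mul, sub_left_inj]
  ring

end Subgradient

lemma sub_mul_sub_sq_le_integral {u : ℝ → ℝ} {a s b : ℝ} {K : ℝ≥0} (hs : s ∈ Icc a b)
    (hu : LipschitzOnWith K u (Icc a b)) (hnn : ∀ x ∈ Icc a b, 0 ≤ u x) :
    (s - a) * u a - K * (s - a) ^ 2 / 2 ≤ ∫ x in a..b, u x := by
  have hab : a ≤ b := hs.1.trans hs.2
  have ha : a ∈ Icc a b := left_mem_Icc.mpr hab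
  have hint : ∀ c ∈ Icc a b, ∀ d ∈ Icc a b, IntervalIntegrable u volume c d := fun c hc d hd =>
    (hu.continuousOn.mono (uIcc_subset_Icc hc hd)).intervalIntegrable
  have hcone : Continuous fun x : ℝ => (K : ℝ) * (x - a) := by fun_prop
  have hline : ∫ x in a..s, (u a - K * (x - a)) ≤ ∫ x in a..s, u x := by
    refine integral_mono_on hs.1 ((continuous_const.sub hcone).intervalIntegrable _ _)
      (hint a ha s hs) fun x hx => ?_
    have := hu.dist_le_mul x ⟨hx.1, hx.2.trans hs.2⟩ a ha
    rw [Real.dist_eq, Real.dist_eq, abs_of_nonneg (sub_nonneg.mpr hx.1)] at this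
    linarith [neg_abs_le (u x - u a)]
  have hline_eq : ∫ x in a..s, (u a - K * (x - a)) = (s - a) * u a - K * (s - a) ^ 2 / 2 := by
    rw [integral_sub intervalIntegrable_const (hcone.intervalIntegrable _ _),
      intervalIntegral.integral_const_mul]
    simp only [intervalIntegral.integral_const, smul_eq_mul, intervalIntegrable_id,
      intervalIntegrable_const, intervalIntegral.integral_sub, integral_id, sub_right_inj]
    ring
  have htail : 0 ≤ ∫ x in s..b, u x :=
    integral_nonneg hs.2 fun x hx => hnn x ⟨hs.1.trans hx.1, hx.2⟩
  rw [← integral_add_adjacent_intervals (hint a ha s hs) (hint s hs b (right_mem_Icc.mpr hab))]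
  linarith

section Mechanism

variable {V t H L : ℝ}

lemma secU_eq (y x : ℝ) : secU V t L y x = (V - t - L) + t * (1 - x) * (2 * y - 1) := by
  unfold secU; ring

lemma firstW_eq_secU_xlow (ht : t ≠ 0) (y : ℝ) :
    firstW V t H L y = secU V t L y (xlow t H L) := by
  unfold firstW secU xlow
  field_simp
  ring

lemma xlow_mem_Ioo (ht : 0 < t) (hLH : L < H) (hHL : H - L < 2 * t) : xlow t H L ∈ Ioo 0 1 := by
  unfold xlow
  constructor
  · linarith [(div_lt_one (by linarith : 0 < 2 * t)).mpr hHL]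
  · linarith [div_pos (sub_pos.mpr hLH) (by linarith : 0 < 2 * t)]

noncomputable def thresholdRevenue (V t H L s : ℝ) : ℝ :=
  xlow t H L * (V - xlow t H L * t - H) + (1 - xlow t H L) * (V - t - L)
    + t * (s - xlow t H L) * (1 - s - xlow t H L)

noncomputable def thresholdPay (V t L s x : ℝ) : ℝ :=
  if x ≤ s then V - L - t * s else V - t - L

noncomputable def thresholdPay₁ (V t H L s : ℝ) : ℝ :=
  V - xlow t H L * t - H - t * (s - xlow t H L)

lemma antitone_thresholdPay {s : ℝ} (ht : 0 ≤ t) (hs : s ≤ 1) :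
    Antitone (thresholdPay V t L s) := fun a b hab => by
  unfold thresholdPay
  split_ifs <;> nlinarith

lemma feasibleNoOB_threshold {s : ℝ} (ht : 0 < t) (hs : s ∈ Icc (xlow t H L) 1) :
    FeasibleNoOB V t H L (fun x => if x ≤ s then 1 else 1 / 2) (thresholdPay V t L s)
      (thresholdPay₁ V t H L s) := by
  have hℓs := mul_nonneg ht.le (sub_nonneg.mpr hs.1)
  refine ⟨measurable_const.ite measurableSet_Iic measurable_const,
    fun x _ => by dsimp only; split_ifs <;> norm_num,
    measurable_const.ite measurableSet_Iic measurable_const,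
    (antitone_thresholdPay ht.le hs.2).intervalIntegrable, fun x hx x' _ => ?_, fun x' _ => ?_,
    fun x hx => ?_, fun x hx => ?_, ?_⟩
  all_goals
    simp only [thresholdPay, thresholdPay₁, firstW_eq_secU_xlow ht.ne', secU_eq]
    try split_ifs
  all_goals nlinarith

lemma revenue_threshold {s : ℝ} (ht : 0 ≤ t) (hs : s ∈ Icc (xlow t H L) 1) :
    Revenue t H L (thresholdPay V t L s) (thresholdPay₁ V t H L s)
      = thresholdRevenue V t H L s := by
  have hint (a b : ℝ) : IntervalIntegrable (thresholdPay V t L s) volume a b :=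
    (antitone_thresholdPay ht hs.2).intervalIntegrable
  have hlow :
      ∫ x in xlow t H L..s, thresholdPay V t L s x = (s - xlow t H L) * (V - L - t * s) := by
    rw [integral_congr (f := thresholdPay V t L s) (g := fun _ => V - L - t * s)
      fun x hx => if_pos (uIcc_of_le hs.1 ▸ hx).2, intervalIntegral.integral_const, smul_eq_mul]
  have hhigh : ∫ x in s..1, thresholdPay V t L s x = (1 - s) * (V - t - L) := by
    rw [integral_congr_ae (f := thresholdPay V t L s) (g := fun _ => V - t - L)
      (ae_of_all _ fun x hx => if_neg (uIoc_of_le hs.2 ▸ hx).1.not_ge),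
      intervalIntegral.integral_const, smul_eq_mul]
  rw [Revenue, ← integral_add_adjacent_intervals (hint _ _) (hint _ _), hlow, hhigh,
    thresholdPay₁, thresholdRevenue]
  ring

lemma revenue_le_thresholdRevenue {y m : ℝ → ℝ} {m₁ : ℝ} (ht : 0 < t)
    (hℓ : xlow t H L ∈ Icc 0 1) (hF : FeasibleNoOB V t H L y m m₁) :
    Revenue t H L m m₁ ≤ thresholdRevenue V t H L (max (xlow t H L) (1 / 2)) := by
  obtain ⟨-, hy, -, hmint, hIC2, hIC1a, -, hIR, -⟩ := hF
  set ℓ := xlow t H L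
  set s := max ℓ (1 / 2)
  set u : ℝ → ℝ := fun x => secU V t L (y x) x - m x with hu
  set g : ℝ → ℝ := fun x => -(t * (2 * y x - 1)) with hg
  have hgK : ∀ x ∈ Icc ℓ 1, |g x| ≤ t.toNNReal := fun x hx => by
    rw [Real.coe_toNNReal t ht.le, hg, abs_neg, abs_mul, abs_of_pos ht]
    have := hy x hx
    exact mul_le_of_le_one_right ht.le (abs_le.mpr ⟨by linarith [this.1], by linarith [this.2]⟩)
  have hsub : ∀ p ∈ Icc ℓ 1, ∀ q ∈ Icc ℓ 1, u q + g q * (p - q) ≤ u p := fun p hp q hq => by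
    have := hIC2 p hp q hq
    simp only [hu, hg, secU_eq] at this ⊢
    linarith
  have hlip : LipschitzOnWith t.toNNReal u (Icc ℓ 1) := lipschitzOnWith_of_subgradient hgK hsub
  have hm : ∀ x, m x = (V - t - L) + (x - 1) * g x - u x := fun x => by
    simp only [hu, hg, secU_eq]; ring
  have huint : IntervalIntegrable u volume ℓ 1 :=
    (hlip.continuousOn.mono (uIcc_of_le hℓ.2).subset).intervalIntegrable
  have hgint : IntervalIntegrable (fun x => (x - 1) * g x) volume ℓ 1 := by
    have := (hmint.sub (intervalIntegrable_const (c := V - t - L))).add huint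
    convert this using 2 with x
    rw [hm x]; ring
  have hrev : Revenue t H L m m₁
      = ℓ * m₁ + (1 - ℓ) * (V - t - L) + (1 - ℓ) * u ℓ - 2 * ∫ x in ℓ..1, u x := by
    rw [Revenue, integral_congr fun x _ => hm x,
      integral_sub (intervalIntegrable_const.add hgint) huint,
      integral_add intervalIntegrable_const hgint, integral_sub_mul_subgradient hℓ.2 hgK hsub]
    simp only [intervalIntegral.integral_const, smul_eq_mul]
    ring
  have hm₁ : m₁ ≤ V - ℓ * t - H - u ℓ := by
    have := hIC1a ℓ (left_mem_Icc.mpr hℓ.2)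
    rw [firstW_eq_secU_xlow ht.ne'] at this
    simp only [hu]
    linarith
  have hlow := sub_mul_sub_sq_le_integral ⟨le_max_left ℓ (1 / 2), max_le hℓ.2 (by norm_num)⟩
    hlip hIR
  rw [Real.coe_toNNReal t ht.le] at hlow
  have huℓ : 0 ≤ u ℓ := hIR ℓ (left_mem_Icc.mpr hℓ.2)
  have hs : (1 - 2 * s) * (s - ℓ) = 0 ∧ 1 - 2 * s ≤ 0 := by
    rcases le_total ℓ (1 / 2) with h | h
    · simp [s, max_eq_right h]
    · simp only [s, max_eq_left h]; constructor <;> linarith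
  rw [hrev, thresholdRevenue]
  nlinarith [mul_le_mul_of_nonneg_left hm₁ hℓ.1, mul_nonpos_of_nonpos_of_nonneg hs.2 huℓ]

end Mechanism

theorem statement2_general (V t H L : ℝ) (ht : 0 < t) (hLH : L < H)
    (hHL : H - L < 2 * t) :
    max (xlow t H L) (1 / 2) ∈ Icc (xlow t H L) 1 ∧
    max (xlow t H L) (1 / 2)
      ≤ max (max (xlow t H L) (1 / 2)) (1 - xlow t H L * (H - L) / L) ∧
    ∃ m : ℝ → ℝ, ∃ m₁ : ℝ,
      FeasibleNoOB V t H L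
        (fun x => if x ≤ max (xlow t H L) (1 / 2) then 1 else 1 / 2) m m₁ ∧
      ∀ y' m' m₁', FeasibleNoOB V t H L y' m' m₁' →
        Revenue t H L m' m₁' ≤ Revenue t H L m m₁ := by
  have hℓ := xlow_mem_Ioo ht hLH hHL
  have hs : max (xlow t H L) (1 / 2) ∈ Icc (xlow t H L) 1 :=
    ⟨le_max_left _ _, max_le hℓ.2.le (by norm_num)⟩
  refine ⟨hs, le_max_left _ _, thresholdPay V t L _, thresholdPay₁ V t H L _,
    feasibleNoOB_threshold ht hs, fun y' m' m₁' hF => ?_⟩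
  rw [revenue_threshold ht.le hs]
  exact revenue_le_thresholdRevenue ht (Ioo_subset_Icc_self hℓ) hF

/-- When the broker dictates retail prices (no obedience constraints), the optimal
mechanism is the threshold mechanism with threshold `x** = max{x̲, 1/2}`, and
`x** ≤ x* = max{x̲, 1/2, 1 - x̲·(H-L)/L}`. -/
theorem statement2 (V t H L : ℝ) (ht : 0 < t) (hL0 : 0 < L) (hLH : L < H)
    (hHL : H - L < 2 * t) (hV : 0 < V - t - H) :
    max (xlow t H L) (1 / 2) ∈ Icc (xlow t H L) 1 ∧
    max (xlow t H L) (1 / 2)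
      ≤ max (max (xlow t H L) (1 / 2)) (1 - xlow t H L * (H - L) / L) ∧
    ∃ m : ℝ → ℝ, ∃ m₁ : ℝ,
      FeasibleNoOB V t H L
        (fun x => if x ≤ max (xlow t H L) (1 / 2) then 1 else 1 / 2) m m₁ ∧
      ∀ y' m' m₁', FeasibleNoOB V t H L y' m' m₁' →
        Revenue t H L m' m₁' ≤ Revenue t H L m m₁ :=
  statement2_general V t H L ht hLH hHL
end

section
/- Fix reals V, t, H, L with t > 0, 0 < L < H, H − L < 2t and V − t − H > 0, and set x̲ = 1 − (H−L)/(2t). Let x, x' ∈ [x̲, 1] with x ≤ x', let y(x), y(x') ∈ [0,1] and m(x), m(x') ∈ ℝ, and assume the two IC constraints between x and x' hold: U(y(x),x) − m(x) ≥ U(y(x'),x) − m(x') and U(y(x'),x') − m(x') ≥ U(y(x),x') − m(x). Then the sandwich inequality holds: 2·(y(x) − y(x'))·(1 − x)·t ≥ m(x) − m(x') ≥ 2·(y(x) − y(x'))·(1 − x')·t. -/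
open Set

/-- The sandwich inequality implied by the pairwise IC constraints between `x ≤ x'`:
`2(y(x) - y(x'))(1 - x)t ≥ m(x) - m(x') ≥ 2(y(x) - y(x'))(1 - x')t`. -/
theorem statement4 (V t H L : ℝ) (ht : 0 < t) (hL0 : 0 < L) (hLH : L < H)
    (hHL : H - L < 2 * t) (hV : 0 < V - t - H)
    (x x' yx yx' mx mx' : ℝ)
    (hx : x ∈ Icc (xlow t H L) 1) (hx' : x' ∈ Icc (xlow t H L) 1) (hle : x ≤ x')
    (hyx : yx ∈ Icc (0 : ℝ) 1) (hyx' : yx' ∈ Icc (0 : ℝ) 1)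
    (hIC1 : secU V t L yx x - mx ≥ secU V t L yx' x - mx')
    (hIC2 : secU V t L yx' x' - mx' ≥ secU V t L yx x' - mx) :
    2 * (yx - yx') * (1 - x) * t ≥ mx - mx' ∧
    mx - mx' ≥ 2 * (yx - yx') * (1 - x') * t := by
  unfold secU at hIC1 hIC2
  constructor <;> nlinarith [hIC1, hIC2]
end

section
/- Fix reals V, t, H, L with t > 0, 0 < L < H, H − L < 2t and V − t − H > 0, and set x̲ = 1 − (H−L)/(2t). Let xᵢ ∈ [x̲, 1], let y̲, yᵢ ∈ [0,1], and let m̲, mᵢ, m₁ ∈ ℝ. Assume: (a) the first-segment IC constraint binds, i.e. (V − x̲·t − H) − m₁ = W(y̲) − m̲ where W(y') = y'·(V − x̲·t − L) + (1 − y')·(V − x̲·t − H); and (b) the lower sandwich inequality m̲ − mᵢ ≥ 2·(y̲ − yᵢ)·(1 − xᵢ)·t holds. Then the IC constraint from consumer xᵢ toward the first segment holds: U(yᵢ, xᵢ) − mᵢ ≥ (V − xᵢ·t − H) − m₁. -/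
open Set

/-- If the first-segment IC constraint toward `x̲` binds and the lower sandwich
inequality between `x̲` and `xᵢ` holds, then the IC constraint from consumer `xᵢ`
toward the first segment holds. -/
theorem statement6 (V t H L : ℝ) (ht : 0 < t) (hL0 : 0 < L) (hLH : L < H)
    (hHL : H - L < 2 * t) (hV : 0 < V - t - H)
    (xi : ℝ) (hxi : xi ∈ Icc (xlow t H L) 1)
    (yl yi : ℝ) (hyl : yl ∈ Icc (0 : ℝ) 1) (hyi : yi ∈ Icc (0 : ℝ) 1)
    (ml mi m₁ : ℝ)
    (hbind : (V - xlow t H L * t - H) - m₁ = firstW V t H L yl - ml)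
    (hsand : ml - mi ≥ 2 * (yl - yi) * (1 - xi) * t) :
    secU V t L yi xi - mi ≥ (V - xi * t - H) - m₁ := by
  obtain ⟨hx1, hx2⟩ := hxi
  rw [xlow] at hx1
  have ht' : (0 : ℝ) < 2 * t := by linarith
  have hkey : 2 * t * (1 - xi) ≤ H - L := by
    have h := (le_div_iff₀ ht').mp (by linarith : 1 - xi ≤ (H - L) / (2 * t))
    nlinarith
  have hm : m₁ = ml - yl * (H - L) := by
    simp only [firstW, xlow] at hbind; ring_nf at hbind ⊢; linarith
  simp only [secU, hm]
  nlinarith [mul_nonneg (by linarith [hyl.2] : (0:ℝ) ≤ 1 - yl)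
    (by linarith : (0:ℝ) ≤ H - L - 2 * t * (1 - xi))]
end

section
/- Fix reals V, t, H, L with t > 0, 0 < L < H, H − L < 2t and V − t − H > 0, and set x̲ = 1 − (H−L)/(2t). Suppose (y, m, m₁) is a feasible reduced mechanism in which the first-segment IC constraint toward x̲ is slack, i.e. (V − x̲·t − H) − m₁ > W(x̲) − m(x̲), where W(x') = y(x')·(V − x̲·t − L) + (1 − y(x'))·(V − x̲·t − H). Then the mechanism (y, m, m₁') with m₁' = m₁ + [((V − x̲·t − H) − m₁) − (W(x̲) − m(x̲))] is also feasible and has strictly higher revenue. Consequently, in every revenue-maximal feasible reduced mechanism the constraint binds: (V − x̲·t − H) − m₁ = W(x̲) − m(x̲). -/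
open MeasureTheory Set intervalIntegral

/-- Feasibility of a reduced mechanism `(y, m, m₁)`. -/
def Feasible (V t H L : ℝ) (y m : ℝ → ℝ) (m₁ : ℝ) : Prop :=
  Measurable y ∧
  (∀ x ∈ Icc (xlow t H L) 1, y x ∈ Icc (0 : ℝ) 1) ∧
  Measurable m ∧
  IntervalIntegrable m volume (xlow t H L) 1 ∧
  -- (IC2)
  (∀ x ∈ Icc (xlow t H L) 1, ∀ x' ∈ Icc (xlow t H L) 1,
    secU V t L (y x) x - m x ≥ secU V t L (y x') x - m x') ∧
  -- (IC1a)
  (∀ x' ∈ Icc (xlow t H L) 1,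
    (V - xlow t H L * t - H) - m₁ ≥ firstW V t H L (y x') - m x') ∧
  -- (IC1b)
  (∀ x ∈ Icc (xlow t H L) 1,
    secU V t L (y x) x - m x ≥ (V - x * t - H) - m₁) ∧
  -- (IR)
  (∀ x ∈ Icc (xlow t H L) 1, secU V t L (y x) x - m x ≥ 0) ∧
  ((V - xlow t H L * t - H) - m₁ ≥ 0) ∧
  -- (OB)
  xlow t H L * H ≥ (xlow t H L + ∫ x in (xlow t H L)..1, (1 - y x)) * L

/-- If the first-segment IC constraint toward `x̲` is slack in a feasible mechanism,
raising `m₁` by the slack preserves feasibility and strictly raises revenue;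
consequently, in every revenue-maximal feasible reduced mechanism the constraint binds. -/
theorem statement7 (V t H L : ℝ) (ht : 0 < t) (hL0 : 0 < L) (hLH : L < H)
    (hHL : H - L < 2 * t) (hV : 0 < V - t - H) :
    (∀ (y m : ℝ → ℝ) (m₁ : ℝ), Feasible V t H L y m m₁ →
      (V - xlow t H L * t - H) - m₁ > firstW V t H L (y (xlow t H L)) - m (xlow t H L) →
      Feasible V t H L y m
        (m₁ + (((V - xlow t H L * t - H) - m₁)
          - (firstW V t H L (y (xlow t H L)) - m (xlow t H L)))) ∧
      Revenue t H L m m₁ <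
        Revenue t H L m
          (m₁ + (((V - xlow t H L * t - H) - m₁)
            - (firstW V t H L (y (xlow t H L)) - m (xlow t H L))))) ∧
    (∀ (y m : ℝ → ℝ) (m₁ : ℝ), Feasible V t H L y m m₁ →
      (∀ y' m' m₁', Feasible V t H L y' m' m₁' →
        Revenue t H L m' m₁' ≤ Revenue t H L m m₁) →
      (V - xlow t H L * t - H) - m₁
        = firstW V t H L (y (xlow t H L)) - m (xlow t H L)) := by
  have hxl1 : xlow t H L ≤ 1 := by
    unfold xlow
    have h1 : 0 < (H - L) / (2 * t) := div_pos (by linarith) (by linarith)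
    linarith
  have hxl0 : 0 < xlow t H L := by
    unfold xlow
    rw [sub_pos, div_lt_one (by linarith)]
    linarith
  have hmem : xlow t H L ∈ Icc (xlow t H L) 1 := ⟨le_refl _, hxl1⟩
  have hkey : ∀ y', secU V t L y' (xlow t H L) = firstW V t H L y' := by
    intro y'
    have hx : (V - t) - (1 - xlow t H L) * t - L = V - xlow t H L * t - H := by
      unfold xlow
      field_simp
      ring
    unfold secU firstW
    rw [hx]
  have hmain : ∀ (y m : ℝ → ℝ) (m₁ : ℝ), Feasible V t H L y m m₁ →
      (V - xlow t H L * t - H) - m₁ > firstW V t H L (y (xlow t H L)) - m (xlow t H L) →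
      Feasible V t H L y m
        (m₁ + (((V - xlow t H L * t - H) - m₁)
          - (firstW V t H L (y (xlow t H L)) - m (xlow t H L)))) ∧
      Revenue t H L m m₁ <
        Revenue t H L m
          (m₁ + (((V - xlow t H L * t - H) - m₁)
            - (firstW V t H L (y (xlow t H L)) - m (xlow t H L)))) := by
    intro y m m₁ hf hslack
    obtain ⟨hy, hy01, hm, hint, hIC2, hIC1a, hIC1b, hIR2, hIR1, hOB⟩ := hf
    set δ := ((V - xlow t H L * t - H) - m₁)
      - (firstW V t H L (y (xlow t H L)) - m (xlow t H L)) with hδ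
    have hδpos : 0 < δ := sub_pos.mpr hslack
    constructor
    · refine ⟨hy, hy01, hm, hint, hIC2, ?_, ?_, hIR2, ?_, hOB⟩
      · intro x' hx'
        have h2 := hIC2 (xlow t H L) hmem x' hx'
        rw [hkey, hkey] at h2
        linarith
      · intro x hx
        have h3 := hIC1b x hx
        linarith
      · have h4 := hIR2 (xlow t H L) hmem
        rw [hkey] at h4
        linarith
    · unfold Revenue
      nlinarith [mul_pos hxl0 hδpos]
  refine ⟨hmain, ?_⟩
  intro y m m₁ hf hopt
  by_contra hne
  have hge := hf.2.2.2.2.2.1 (xlow t H L) hmem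
  have hgt : (V - xlow t H L * t - H) - m₁
      > firstW V t H L (y (xlow t H L)) - m (xlow t H L) :=
    lt_of_le_of_ne hge (fun h => hne h.symm)
  obtain ⟨hfeas', hrev⟩ := hmain y m m₁ hf hgt
  have := hopt y m _ hfeas'
  linarith
end

section
/- Let t > 0 be real, let 0 < a < b be reals, let y : [a,b] → [0,1] and G : [a,b] → ℝ satisfy, for all x ≤ x' in [a,b], the two IC-derived inequalities G(x) − G(x') ≥ (2·y(x') − 1)·(x' − x)·t and G(x) − G(x') ≤ (2·y(x) − 1)·(x' − x)·t. If y is continuous at a point x₀ ∈ (a,b), then G is differentiable at x₀ with derivative G'(x₀) = (1 − 2·y(x₀))·t. -/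
open Set

/-- Envelope theorem, differential form: if the indirect payoff `G` satisfies the
two-sided IC bounds against allocation `y` on `[a,b]` and `y` is continuous at an
interior point `x₀`, then `G` is differentiable at `x₀` with derivative
`(1 - 2 y(x₀)) t`. -/
theorem statement9 (t a b : ℝ) (ht : 0 < t) (ha : 0 < a) (hab : a < b)
    (y G : ℝ → ℝ) (hy : ∀ x ∈ Icc a b, y x ∈ Icc (0 : ℝ) 1)
    (hIC : ∀ x ∈ Icc a b, ∀ x' ∈ Icc a b, x ≤ x' →
      (2 * y x' - 1) * (x' - x) * t ≤ G x - G x' ∧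
      G x - G x' ≤ (2 * y x - 1) * (x' - x) * t)
    (x₀ : ℝ) (hx₀ : x₀ ∈ Ioo a b)
    (hycont : ContinuousWithinAt y (Icc a b) x₀) :
    HasDerivWithinAt G ((1 - 2 * y x₀) * t) (Icc a b) x₀ := by
  set c := (1 - 2 * y x₀) * t with hc
  have hx₀I : x₀ ∈ Icc a b := ⟨le_of_lt hx₀.1, le_of_lt hx₀.2⟩
  have key : ∀ x ∈ Icc a b,
      |G x - G x₀ - (x - x₀) * c| ≤ 2 * t * |y x - y x₀| * |x - x₀| := by
    intro x hx
    have habs1 : y x₀ - y x ≤ |y x - y x₀| := by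
      rw [abs_sub_comm]; exact le_abs_self _
    have habs2 : y x - y x₀ ≤ |y x - y x₀| := le_abs_self _
    rcases le_total x₀ x with h | h
    · obtain ⟨h1, h2⟩ := hIC x₀ hx₀I x hx h
      have hxx : |x - x₀| = x - x₀ := abs_of_nonneg (by linarith)
      have hnn : 0 ≤ G x - G x₀ - (x - x₀) * c := by
        rw [hc]; nlinarith
      rw [abs_of_nonneg hnn, hxx, hc]
      nlinarith [mul_le_mul_of_nonneg_right habs1
        (mul_nonneg (by linarith : (0:ℝ) ≤ x - x₀) ht.le)]
    · obtain ⟨h1, h2⟩ := hIC x hx x₀ hx₀I h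
      have hxx : |x - x₀| = x₀ - x := by
        rw [abs_sub_comm]; exact abs_of_nonneg (by linarith)
      have hnn : 0 ≤ G x - G x₀ - (x - x₀) * c := by
        rw [hc]; nlinarith
      rw [abs_of_nonneg hnn, hxx, hc]
      nlinarith [mul_le_mul_of_nonneg_right habs2
        (mul_nonneg (by linarith : (0:ℝ) ≤ x₀ - x) ht.le)]
  rw [hasDerivWithinAt_iff_isLittleO, Asymptotics.isLittleO_iff]
  intro ε hε
  have h2t : (0 : ℝ) < 2 * t := by linarith
  have hmem : ∀ᶠ x in nhdsWithin x₀ (Icc a b), x ∈ Icc a b := self_mem_nhdsWithin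
  have hyε : ∀ᶠ x in nhdsWithin x₀ (Icc a b), dist (y x) (y x₀) < ε / (2 * t) :=
    Metric.tendsto_nhds.mp hycont _ (div_pos hε h2t)
  filter_upwards [hmem, hyε] with x hx hdy
  have hb := key x hx
  rw [Real.dist_eq] at hdy
  have h1 : 2 * t * |y x - y x₀| * |x - x₀| ≤ ε * |x - x₀| := by
    have : 2 * t * |y x - y x₀| ≤ ε := by
      have := hdy.le
      calc 2 * t * |y x - y x₀| ≤ 2 * t * (ε / (2 * t)) := by
            exact mul_le_mul_of_nonneg_left this (by linarith)
        _ = ε := by field_simp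
    exact mul_le_mul_of_nonneg_right this (abs_nonneg _)
  have : ‖G x - G x₀ - (x - x₀) • c‖ = |G x - G x₀ - (x - x₀) * c| := by
    simp [Real.norm_eq_abs, smul_eq_mul]
  rw [this, Real.norm_eq_abs]
  linarith
end

section
/- Let t > 0 be real, let 0 < a < b be reals, let y : [a,b] → [0,1] be continuous, and let G : [a,b] → ℝ satisfy, for all x ≤ x' in [a,b], the inequalities G(x) − G(x') ≥ (2·y(x') − 1)·(x' − x)·t and G(x) − G(x') ≤ (2·y(x) − 1)·(x' − x)·t. Then for every x ∈ [a,b], G(x) = G(b) + ∫_{x}^{b} (2·y(z) − 1)·t dz. -/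
open Set intervalIntegral

/-- Envelope theorem, integral (payoff-equivalence) form: if the indirect payoff `G`
satisfies the two-sided IC bounds against a continuous allocation `y` on `[a,b]`, then
`G(x) = G(b) + ∫_x^b (2 y(z) - 1) t dz` for every `x ∈ [a,b]`. -/
theorem statement10 (t a b : ℝ) (ht : 0 < t) (ha : 0 < a) (hab : a < b)
    (y G : ℝ → ℝ) (hy : ∀ x ∈ Icc a b, y x ∈ Icc (0 : ℝ) 1)
    (hycont : ContinuousOn y (Icc a b))
    (hIC : ∀ x ∈ Icc a b, ∀ x' ∈ Icc a b, x ≤ x' →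
      (2 * y x' - 1) * (x' - x) * t ≤ G x - G x' ∧
      G x - G x' ≤ (2 * y x - 1) * (x' - x) * t) :
    ∀ x ∈ Icc a b, G x = G b + ∫ z in x..b, (2 * y z - 1) * t := by
  set f : ℝ → ℝ := fun z => (2 * y z - 1) * t with hf
  have key : ∀ x ∈ Icc a b, ∀ x' ∈ Icc a b,
      |G x - G x' - (x' - x) * f x| ≤ 2 * t * |y x' - y x| * |x' - x| := by
    intro x hx x' hx'
    have hfx : f x = (2 * y x - 1) * t := rfl
    rw [hfx, abs_le]
    have hm : |(y x' - y x) * (x' - x)| = |y x' - y x| * |x' - x| := abs_mul _ _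
    have hp1 := le_abs_self ((y x' - y x) * (x' - x))
    have hp2 := neg_abs_le ((y x' - y x) * (x' - x))
    rcases le_total x x' with h | h
    · obtain ⟨h1, h2⟩ := hIC x hx x' hx' h
      constructor
      · nlinarith [ht.le]
      · nlinarith [ht.le]
    · obtain ⟨h1, h2⟩ := hIC x' hx' x hx h
      constructor
      · nlinarith [ht.le]
      · nlinarith [ht.le]
  have hder : ∀ x ∈ Icc a b, HasDerivWithinAt (fun z => -G z) (f x) (Icc a b) x := by
    intro x hx
    rw [hasDerivWithinAt_iff_isLittleO, Asymptotics.isLittleO_iff]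
    intro ε hε
    have hyc : ContinuousWithinAt y (Icc a b) x := hycont x hx
    have h1 : ∀ᶠ x' in nhdsWithin x (Icc a b), y x' ∈ Metric.ball (y x) (ε / (2 * t)) :=
      hyc (Metric.ball_mem_nhds (y x) (by positivity))
    filter_upwards [h1, self_mem_nhdsWithin] with x' hΔ hx'
    have hΔ' : |y x' - y x| < ε / (2 * t) := by
      simpa [Real.dist_eq] using (Metric.mem_ball.mp hΔ)
    have hk := key x hx x' hx'
    have hb : 2 * t * |y x' - y x| * |x' - x| ≤ ε * |x' - x| := by
      have h2 : 2 * t * |y x' - y x| ≤ ε := by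
        rw [mul_comm (2 * t), ← le_div_iff₀ (by positivity)]
        exact hΔ'.le
      exact mul_le_mul_of_nonneg_right h2 (abs_nonneg _)
    have heq : -G x' - -G x - (x' - x) • f x = G x - G x' - (x' - x) * f x := by
      simp [smul_eq_mul]; ring
    calc ‖-G x' - -G x - (x' - x) • f x‖ = |G x - G x' - (x' - x) * f x| := by
          rw [Real.norm_eq_abs, heq]
      _ ≤ 2 * t * |y x' - y x| * |x' - x| := hk
      _ ≤ ε * |x' - x| := hb
      _ = ε * ‖x' - x‖ := by rw [Real.norm_eq_abs]
  intro x hx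
  have hxb : x ≤ b := hx.2
  have hsub : Icc x b ⊆ Icc a b := Icc_subset_Icc hx.1 le_rfl
  have hcontG : ContinuousOn (fun z => -G z) (Icc x b) := fun z hz =>
    ((hder z (hsub hz)).continuousWithinAt).mono hsub
  have hftc : ∫ z in x..b, f z = (fun z => -G z) b - (fun z => -G z) x := by
    apply intervalIntegral.integral_eq_sub_of_hasDeriv_right_of_le hxb hcontG
    · intro z hz
      have hzab : z ∈ Icc a b := hsub (Ioo_subset_Icc_self hz)
      have hmem : Icc a b ∈ nhdsWithin z (Ioi z) :=
        mem_nhdsWithin_of_mem_nhds (Icc_mem_nhds (lt_of_le_of_lt hx.1 hz.1) hz.2)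
      exact (hder z hzab).mono_of_mem_nhdsWithin hmem
    · apply ContinuousOn.intervalIntegrable
      rw [uIcc_of_le hxb]
      exact ((continuousOn_const.mul (hycont.mono hsub)).sub continuousOn_const).mul
        continuousOn_const
  simp only at hftc
  have hval : ∫ z in x..b, (2 * y z - 1) * t = G x - G b := by
    rw [show (∫ z in x..b, (2 * y z - 1) * t) = ∫ z in x..b, f z from rfl, hftc]; ring
  rw [hval]; ring
end

section
/- Let x̲ ≤ a ≤ b ≤ c ≤ d ≤ 1 be reals and let y, ŷ : [x̲,1] → ℝ be integrable functions such that ŷ(x) ≥ y(x) for all x ∈ [a,b], ŷ(x) ≤ y(x) for all x ∈ [c,d], ŷ(x) = y(x) for all x ∈ [x̲,1] outside [a,b] ∪ [c,d], and ∫_{x̲}^{1} (ŷ(x) − y(x)) dx = 0. Then ∫_{x̲}^{1} x·ŷ(x) dx ≤ ∫_{x̲}^{1} x·y(x) dx. -/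
open MeasureTheory Set intervalIntegral

lemma zero_piece (p q : ℝ) (hpq : p ≤ q) (f : ℝ → ℝ)
    (h : ∀ x ∈ Ioo p q, f x = 0) : (∫ x in p..q, f x) = 0 := by
  have hq : ∀ᵐ x : ℝ ∂volume, x ≠ q := by
    rw [ae_iff]
    simp only [ne_eq, not_not, setOf_eq_eq_singleton]
    exact Real.volume_singleton
  have : (∫ x in p..q, f x) = ∫ x in p..q, (0 : ℝ) := by
    apply intervalIntegral.integral_congr_ae
    filter_upwards [hq] with x hx hmem
    rw [uIoc_of_le hpq] at hmem
    exact h x ⟨hmem.1, lt_of_le_of_ne hmem.2 hx⟩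
  simp [this]

/-- Moving allocation mass from a right interval `[c,d]` up to a left interval `[a,b]`
while keeping the total mass fixed weakly decreases the first moment `∫ x·y(x) dx`. -/
theorem statement12 (xl a b c d : ℝ)
    (h1 : xl ≤ a) (h2 : a ≤ b) (h3 : b ≤ c) (h4 : c ≤ d) (h5 : d ≤ 1)
    (y yh : ℝ → ℝ)
    (hyint : IntervalIntegrable y volume xl 1)
    (hyhint : IntervalIntegrable yh volume xl 1)
    (hup : ∀ x ∈ Icc a b, y x ≤ yh x)
    (hdown : ∀ x ∈ Icc c d, yh x ≤ y x)
    (hout : ∀ x ∈ Icc xl 1, x ∉ Icc a b ∪ Icc c d → yh x = y x)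
    (hmass : (∫ x in xl..1, (yh x - y x)) = 0) :
    (∫ x in xl..1, x * yh x) ≤ ∫ x in xl..1, x * y x := by
  set g : ℝ → ℝ := fun x => yh x - y x with hgdef
  have hxl1 : xl ≤ 1 := h1.trans (h2.trans (h3.trans (h4.trans h5)))
  have hg : IntervalIntegrable g volume xl 1 := hyhint.sub hyint
  have hxg : IntervalIntegrable (fun x => x * g x) volume xl 1 :=
    hg.continuousOn_mul continuous_id.continuousOn
  -- subinterval integrability
  have hsub : ∀ (f : ℝ → ℝ), IntervalIntegrable f volume xl 1 →
      ∀ p q : ℝ, xl ≤ p → p ≤ q → q ≤ 1 → IntervalIntegrable f volume p q := by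
    intro f hf p q hp hpq hq
    apply hf.mono_set
    rw [uIcc_of_le hpq, uIcc_of_le hxl1]
    exact Icc_subset_Icc hp hq
  -- splitting
  have split : ∀ (f : ℝ → ℝ), IntervalIntegrable f volume xl 1 →
      (∫ x in xl..1, f x) = (∫ x in xl..a, f x) + (∫ x in a..b, f x)
        + (∫ x in b..c, f x) + (∫ x in c..d, f x) + (∫ x in d..1, f x) := by
    intro f hf
    have hxa : xl ≤ a := h1
    have hb1 : b ≤ 1 := h3.trans (h4.trans h5)
    have hc1 : c ≤ 1 := h4.trans h5
    have i1 := intervalIntegral.integral_add_adjacent_intervals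
      (hsub f hf xl a le_rfl h1 (h2.trans hb1))
      (hsub f hf a 1 h1 (h2.trans hb1) le_rfl)
    have i2 := intervalIntegral.integral_add_adjacent_intervals
      (hsub f hf a b h1 h2 hb1) (hsub f hf b 1 (h1.trans h2) hb1 le_rfl)
    have i3 := intervalIntegral.integral_add_adjacent_intervals
      (hsub f hf b c (h1.trans h2) h3 hc1) (hsub f hf c 1 (h1.trans (h2.trans h3)) hc1 le_rfl)
    have i4 := intervalIntegral.integral_add_adjacent_intervals
      (hsub f hf c d (h1.trans (h2.trans h3)) h4 h5)
      (hsub f hf d 1 (h1.trans (h2.trans (h3.trans h4))) h5 le_rfl)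
    rw [← i1, ← i2, ← i3, ← i4]
    ring
  -- g vanishes outside
  have hout' : ∀ x, x ∈ Ioo xl a ∪ Ioo b c ∪ Ioo d 1 → g x = 0 := by
    intro x hx
    have hmem : x ∈ Icc xl 1 ∧ x ∉ Icc a b ∪ Icc c d := by
      rcases hx with (hx | hx) | hx
      · exact ⟨⟨hx.1.le, hx.2.le.trans (h2.trans (h3.trans (h4.trans h5)))⟩,
          by simp only [mem_union, mem_Icc, not_or, not_and_or]
             exact ⟨Or.inl (not_le.2 hx.2), Or.inl (not_le.2 (lt_of_lt_of_le hx.2 (h2.trans h3)))⟩⟩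
      · exact ⟨⟨(h1.trans h2).trans hx.1.le, hx.2.le.trans (h4.trans h5)⟩,
          by simp only [mem_union, mem_Icc, not_or, not_and_or]
             exact ⟨Or.inr (not_le.2 hx.1), Or.inl (not_le.2 hx.2)⟩⟩
      · exact ⟨⟨(h1.trans (h2.trans (h3.trans h4))).trans hx.1.le, hx.2.le⟩,
          by simp only [mem_union, mem_Icc, not_or, not_and_or]
             exact ⟨Or.inr (not_le.2 (lt_of_le_of_lt (h3.trans h4) hx.1)),
               Or.inr (not_le.2 hx.1)⟩⟩
    simpa [hgdef] using sub_eq_zero.2 (hout x hmem.1 hmem.2)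
  have z1 : (∫ x in xl..a, g x) = 0 :=
    zero_piece xl a h1 g (fun x hx => hout' x (Or.inl (Or.inl hx)))
  have z2 : (∫ x in b..c, g x) = 0 :=
    zero_piece b c h3 g (fun x hx => hout' x (Or.inl (Or.inr hx)))
  have z3 : (∫ x in d..1, g x) = 0 :=
    zero_piece d 1 h5 g (fun x hx => hout' x (Or.inr hx))
  have zx1 : (∫ x in xl..a, x * g x) = 0 :=
    zero_piece xl a h1 _ (fun x hx => by rw [hout' x (Or.inl (Or.inl hx)), mul_zero])
  have zx2 : (∫ x in b..c, x * g x) = 0 :=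
    zero_piece b c h3 _ (fun x hx => by rw [hout' x (Or.inl (Or.inr hx)), mul_zero])
  have zx3 : (∫ x in d..1, x * g x) = 0 :=
    zero_piece d 1 h5 _ (fun x hx => by rw [hout' x (Or.inr hx), mul_zero])
  -- mass equation
  have hmass' : (∫ x in a..b, g x) + (∫ x in c..d, g x) = 0 := by
    have := split g hg
    rw [z1, z2, z3] at this
    simpa [hgdef] using (hmass.symm.trans this).symm
  have hb1 : b ≤ 1 := h3.trans (h4.trans h5)
  have hc1 : c ≤ 1 := h4.trans h5
  have hI1 : 0 ≤ ∫ x in a..b, g x :=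
    intervalIntegral.integral_nonneg h2 (fun u hu => sub_nonneg.2 (hup u hu))
  have hA1 : (∫ x in a..b, x * g x) ≤ b * ∫ x in a..b, g x := by
    rw [← intervalIntegral.integral_const_mul]
    apply intervalIntegral.integral_mono_on h2
      (hsub _ hxg a b h1 h2 hb1)
      ((hsub g hg a b h1 h2 hb1).const_mul b)
    intro x hx
    exact mul_le_mul_of_nonneg_right hx.2 (sub_nonneg.2 (hup x hx))
  have hA2 : (∫ x in c..d, x * g x) ≤ c * ∫ x in c..d, g x := by
    rw [← intervalIntegral.integral_const_mul]
    apply intervalIntegral.integral_mono_on h4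
      (hsub _ hxg c d (h1.trans (h2.trans h3)) h4 h5)
      ((hsub g hg c d (h1.trans (h2.trans h3)) h4 h5).const_mul c)
    intro x hx
    exact mul_le_mul_of_nonpos_right hx.1 (sub_nonpos.2 (hdown x hx))
  have key : (∫ x in xl..1, x * g x) ≤ 0 := by
    have hsplit := split _ hxg
    rw [zx1, zx2, zx3] at hsplit
    have hI2 : (∫ x in c..d, g x) = -(∫ x in a..b, g x) := by linarith
    calc (∫ x in xl..1, x * g x)
        = (∫ x in a..b, x * g x) + (∫ x in c..d, x * g x) := by rw [hsplit]; ring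
      _ ≤ b * (∫ x in a..b, g x) + c * (∫ x in c..d, g x) := add_le_add hA1 hA2
      _ = (b - c) * (∫ x in a..b, g x) := by rw [hI2]; ring
      _ ≤ 0 := mul_nonpos_of_nonpos_of_nonneg (by linarith) hI1
  have hxy : IntervalIntegrable (fun x => x * y x) volume xl 1 :=
    hyint.continuousOn_mul continuous_id.continuousOn
  have hxyh : IntervalIntegrable (fun x => x * yh x) volume xl 1 :=
    hyhint.continuousOn_mul continuous_id.continuousOn
  have : (∫ x in xl..1, x * yh x) - (∫ x in xl..1, x * y x) ≤ 0 := by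
    rw [← intervalIntegral.integral_sub hxyh hxy]
    calc (∫ x in xl..1, (x * yh x - x * y x)) = ∫ x in xl..1, x * g x := by
          congr 1; ext x; simp [hgdef, mul_sub]
      _ ≤ 0 := key
  linarith
end

section
/- Fix reals V, t, H, L with t > 0, 0 < L < H, H − L < 2t and V − t − H > 0, and set x̲ = 1 − (H−L)/(2t). Let x', x ∈ [x̲,1] with x' ≤ x, let y', y_x ∈ [0,1] with y_x ≥ 1/2, and let m', m_x ∈ ℝ. If the IC constraint U(y', x') − m' ≥ U(y_x, x') − m_x holds, then U(y', x') − m' ≥ U(y_x, x) − m_x; that is, along any allocation with y ≥ 1/2 satisfying incentive compatibility, the consumer's indirect payoff U(y(x),x) − m(x) is weakly decreasing in x. -/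
open Set

/-- Along an allocation with `y ≥ 1/2` satisfying incentive compatibility, the
indirect payoff is weakly decreasing in the location: if `x' ≤ x`, `y_x ≥ 1/2` and
`U(y', x') − m' ≥ U(y_x, x') − m_x`, then `U(y', x') − m' ≥ U(y_x, x) − m_x`. -/
theorem statement13 (V t H L : ℝ) (ht : 0 < t) (hL0 : 0 < L) (hLH : L < H)
    (hHL : H - L < 2 * t) (hV : 0 < V - t - H)
    (x' x : ℝ) (hx' : x' ∈ Icc (xlow t H L) 1) (hx : x ∈ Icc (xlow t H L) 1)
    (hle : x' ≤ x)
    (y' yx : ℝ) (hy' : y' ∈ Icc (0 : ℝ) 1) (hyx : yx ∈ Icc (0 : ℝ) 1)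
    (hyxhalf : (1 : ℝ) / 2 ≤ yx)
    (m' mx : ℝ)
    (hIC : secU V t L y' x' - m' ≥ secU V t L yx x' - mx) :
    secU V t L y' x' - m' ≥ secU V t L yx x - mx := by
  have h : secU V t L yx x ≤ secU V t L yx x' := by
    unfold secU
    nlinarith [mul_nonneg (sub_nonneg.2 hle) ht.le, sub_nonneg.2 hyxhalf]
  linarith
end

section
/- Fix reals V, t, H, L with t > 0, 0 < L < H, H − L < 2t and V − t − H > 0; set x̲ = 1 − (H−L)/(2t); fix locations x₁ ∈ (0, x̲) and x̲ < x₂ < x₃ < 1 and weights λ₁, λ₂, λ₃ > 0. Then every optimal design (y₂, y₃, m₁, m₂, m₃) of the three-consumer problem satisfies the binding IC constraint from consumer x₂ to consumer x₃: U₂ − m₂ = U(2→3) − m₃. -/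
open Set

/-- Second-segment consumer utility in the three-consumer problem. -/
noncomputable def U2 (V t L x y : ℝ) : ℝ :=
  y * (V - x * t - L) + (1 - y) * ((V - t) - (1 - x) * t - L)

/-- Utility of the first-segment consumer `x₁` when misreporting to a
second-segment consumer with allocation `y`. -/
noncomputable def W1 (V t H L x₁ y : ℝ) : ℝ :=
  y * (V - x₁ * t - L) + (1 - y) * (V - x₁ * t - H)

/-- Feasibility of a design `(y₂, y₃, m₁, m₂, m₃)` of the three-consumer problem:
all pairwise IC constraints, all IR constraints, and the obedience constraint. -/
def Feasible3 (V t H L x₁ x₂ x₃ l₁ l₂ l₃ y₂ y₃ m₁ m₂ m₃ : ℝ) : Prop :=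
  y₂ ∈ Icc (0 : ℝ) 1 ∧ y₃ ∈ Icc (0 : ℝ) 1 ∧
  -- IC: 1→2, 1→3
  ((V - x₁ * t - H) - m₁ ≥ W1 V t H L x₁ y₂ - m₂) ∧
  ((V - x₁ * t - H) - m₁ ≥ W1 V t H L x₁ y₃ - m₃) ∧
  -- IC: 2→1, 2→3
  (U2 V t L x₂ y₂ - m₂ ≥ (V - x₂ * t - H) - m₁) ∧
  (U2 V t L x₂ y₂ - m₂ ≥ U2 V t L x₂ y₃ - m₃) ∧
  -- IC: 3→1, 3→2
  (U2 V t L x₃ y₃ - m₃ ≥ (V - x₃ * t - H) - m₁) ∧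
  (U2 V t L x₃ y₃ - m₃ ≥ U2 V t L x₃ y₂ - m₂) ∧
  -- IR
  ((V - x₁ * t - H) - m₁ ≥ 0) ∧
  (U2 V t L x₂ y₂ - m₂ ≥ 0) ∧
  (U2 V t L x₃ y₃ - m₃ ≥ 0) ∧
  -- OB
  (l₁ * H ≥ (l₁ + l₂ * (1 - y₂) + l₃ * (1 - y₃)) * L)

/-- Optimality: feasibility plus revenue-maximality among feasible designs. -/
def Optimal3 (V t H L x₁ x₂ x₃ l₁ l₂ l₃ y₂ y₃ m₁ m₂ m₃ : ℝ) : Prop :=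
  Feasible3 V t H L x₁ x₂ x₃ l₁ l₂ l₃ y₂ y₃ m₁ m₂ m₃ ∧
  ∀ y₂' y₃' m₁' m₂' m₃', Feasible3 V t H L x₁ x₂ x₃ l₁ l₂ l₃ y₂' y₃' m₁' m₂' m₃' →
    l₁ * m₁' + l₂ * m₂' + l₃ * m₃' ≤ l₁ * m₁ + l₂ * m₂ + l₃ * m₃

private lemma eps3 (a C c D d : ℝ) (ha : 0 < a) (hC : 0 < C) (hc : 0 < c)
    (hD : 0 < D) (hd : 0 < d) :
    ∃ ε : ℝ, 0 < ε ∧ ε ≤ a ∧ ε * c ≤ C ∧ ε * d ≤ D := by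
  refine ⟨min a (min (C / c) (D / d)), ?_, min_le_left _ _, ?_, ?_⟩
  · exact lt_min ha (lt_min (div_pos hC hc) (div_pos hD hd))
  · have h : min a (min (C / c) (D / d)) ≤ C / c :=
      le_trans (min_le_right _ _) (min_le_left _ _)
    calc min a (min (C / c) (D / d)) * c ≤ (C / c) * c := mul_le_mul_of_nonneg_right h hc.le
      _ = C := div_mul_cancel₀ _ (ne_of_gt hc)
  · have h : min a (min (C / c) (D / d)) ≤ D / d :=
      le_trans (min_le_right _ _) (min_le_right _ _)
    calc min a (min (C / c) (D / d)) * d ≤ (D / d) * d := mul_le_mul_of_nonneg_right h hd.le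
      _ = D := div_mul_cancel₀ _ (ne_of_gt hd)

set_option maxHeartbeats 2000000 in
/-- In every optimal design of the three-consumer problem, the IC constraint
from consumer `x₂` to consumer `x₃` binds. -/
theorem statement15 (V t H L x₁ x₂ x₃ l₁ l₂ l₃ : ℝ)
    (ht : 0 < t) (hL0 : 0 < L) (hLH : L < H) (hHL : H - L < 2 * t)
    (hV : 0 < V - t - H)
    (hx₁ : x₁ ∈ Ioo 0 (1 - (H - L) / (2 * t)))
    (hx₂ : 1 - (H - L) / (2 * t) < x₂) (hx₂₃ : x₂ < x₃) (hx₃ : x₃ < 1)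
    (hl₁ : 0 < l₁) (hl₂ : 0 < l₂) (hl₃ : 0 < l₃)
    (y₂ y₃ m₁ m₂ m₃ : ℝ)
    (hopt : Optimal3 V t H L x₁ x₂ x₃ l₁ l₂ l₃ y₂ y₃ m₁ m₂ m₃) :
    U2 V t L x₂ y₂ - m₂ = U2 V t L x₂ y₃ - m₃ := by
  obtain ⟨hfeas, hmax⟩ := hopt
  obtain ⟨hy₂, hy₃, h12, h13, h21, h23, h31, h32, hIR1, hIR2, hIR3, hOB⟩ := hfeas
  by_contra hne
  have hlt : U2 V t L x₂ y₃ - m₃ < U2 V t L x₂ y₂ - m₂ :=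
    lt_of_le_of_ne h23 (fun h => hne h.symm)
  have h2t : (0:ℝ) < 2 * t := by linarith
  have hc2 : 2 * t * (1 - x₂) < H - L := by
    have h1 : 1 - x₂ < (H - L) / (2 * t) := by linarith
    have := (lt_div_iff₀ h2t).mp h1
    linarith
  have hc3 : 2 * t * (1 - x₃) < H - L := by
    have h1 : 1 - x₃ < (H - L) / (2 * t) := by linarith
    have := (lt_div_iff₀ h2t).mp h1
    linarith
  simp only [U2, W1] at hlt h12 h13 h21 h23 h31 h32 hIR2 hIR3 ⊢
  -- Step 1: y₃ < y₂
  have hy32 : y₃ < y₂ := by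
    by_contra hcon
    push_neg at hcon
    nlinarith [mul_nonneg (sub_nonneg.2 hx₂₃.le) (sub_nonneg.2 hcon), ht]
  have hy₃1 : y₃ < 1 := lt_of_lt_of_le hy32 hy₂.2
  -- Step 2: IC 1→3 binds
  have hS13 : (V - x₁ * t - H) - m₁ =
      (y₃ * (V - x₁ * t - L) + (1 - y₃) * (V - x₁ * t - H)) - m₃ := by
    by_contra hne13
    have hSpos : 0 < ((V - x₁ * t - H) - m₁) -
        ((y₃ * (V - x₁ * t - L) + (1 - y₃) * (V - x₁ * t - H)) - m₃) :=
      sub_pos.2 (lt_of_le_of_ne h13 (fun h => hne13 h.symm))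
    have hδpos : 0 < (y₂ * (V - x₂ * t - L) + (1 - y₂) * (V - t - (1 - x₂) * t - L) - m₂) -
        (y₃ * (V - x₂ * t - L) + (1 - y₃) * (V - t - (1 - x₂) * t - L) - m₃) := by linarith
    have hc3pos : 0 < (H - L) - 2 * t * (1 - x₃) := by linarith
    have hBpos : 0 < 2 * t * (x₃ - x₂) := mul_pos h2t (sub_pos.2 hx₂₃)
    obtain ⟨ε, hεpos, hε1, hε2, hε3⟩ := eps3 (1 - y₃) _ _ _ _
      (by linarith : (0:ℝ) < 1 - y₃) hSpos hc3pos hδpos hBpos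
    have hfeas' : Feasible3 V t H L x₁ x₂ x₃ l₁ l₂ l₃ y₂ (y₃ + ε) m₁ m₂
        (m₃ + 2 * t * (1 - x₃) * ε) := by
      simp only [Feasible3, U2, W1, Set.mem_Icc]
      refine ⟨⟨hy₂.1, hy₂.2⟩, ⟨by linarith [hy₃.1], by linarith⟩,
        ?_, ?_, ?_, ?_, ?_, ?_, ?_, ?_, ?_, ?_⟩
      · linarith [h12]
      · linarith [hε2]
      · linarith [h21]
      · linarith [hε3]
      · linarith [h31]
      · linarith [h32]
      · linarith [hIR1]
      · linarith [hIR2]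
      · linarith [hIR3]
      · linarith [hOB, mul_nonneg (mul_nonneg hl₃.le hεpos.le) hL0.le]
    have hrev := hmax y₂ (y₃ + ε) m₁ m₂ (m₃ + 2 * t * (1 - x₃) * ε) hfeas'
    linarith [hrev, mul_pos hl₃ (mul_pos (mul_pos h2t (by linarith : (0:ℝ) < 1 - x₃)) hεpos)]
  -- Step 3: IC 1→2 binds
  have hS12 : (V - x₁ * t - H) - m₁ =
      (y₂ * (V - x₁ * t - L) + (1 - y₂) * (V - x₁ * t - H)) - m₂ := by
    rcases eq_or_lt_of_le hy₂.2 with h1 | h1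
    · rw [h1] at h12 h21 ⊢
      linarith [h12, h21]
    · by_contra hne12
      have hSpos : 0 < ((V - x₁ * t - H) - m₁) -
          ((y₂ * (V - x₁ * t - L) + (1 - y₂) * (V - x₁ * t - H)) - m₂) :=
        sub_pos.2 (lt_of_le_of_ne h12 (fun h => hne12 h.symm))
      have hc2pos : 0 < (H - L) - 2 * t * (1 - x₂) := by linarith
      obtain ⟨ε, hεpos, hε1, hε2, hε3⟩ := eps3 (1 - y₂) _ _ _ _
        (by linarith : (0:ℝ) < 1 - y₂) hSpos hc2pos hSpos hc2pos
      have hfeas' : Feasible3 V t H L x₁ x₂ x₃ l₁ l₂ l₃ (y₂ + ε) y₃ m₁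
          (m₂ + 2 * t * (1 - x₂) * ε) m₃ := by
        simp only [Feasible3, U2, W1, Set.mem_Icc]
        refine ⟨⟨by linarith [hy₂.1], by linarith⟩, ⟨hy₃.1, hy₃.2⟩,
          ?_, ?_, ?_, ?_, ?_, ?_, ?_, ?_, ?_, ?_⟩
        · linarith [hε2]
        · linarith [h13]
        · linarith [h21]
        · linarith [hlt]
        · linarith [h31]
        · linarith [h32, mul_nonneg (mul_nonneg h2t.le (sub_nonneg.2 hx₂₃.le)) hεpos.le]
        · linarith [hIR1]
        · linarith [hIR2]
        · linarith [hIR3]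
        · linarith [hOB, mul_nonneg (mul_nonneg hl₂.le hεpos.le) hL0.le]
      have hrev := hmax (y₂ + ε) y₃ m₁ (m₂ + 2 * t * (1 - x₂) * ε) m₃ hfeas'
      linarith [hrev, mul_pos hl₂ (mul_pos (mul_pos h2t (by linarith : (0:ℝ) < 1 - x₂)) hεpos)]
  -- Step 4: contradiction
  linarith [hS12, hS13, hlt, mul_pos (sub_pos.2 hc2) (sub_pos.2 hy32)]
end

section
/- Fix reals V, t, H, L with t > 0, 0 < L < H, H − L < 2t and V − t − H > 0; set x̲ = 1 − (H−L)/(2t); fix locations x₁ ∈ (0, x̲) and x̲ < x₂ < x₃ < 1 and weights λ₁, λ₂, λ₃ > 0. Then in every optimal design (y₂, y₃, m₁, m₂, m₃) of the three-consumer problem, at least one of the individual rationality constraints of consumers x₂ and x₃ binds: m₂ = U₂ or m₃ = U₃. -/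
open Set

/-- In every optimal design of the three-consumer problem, at least one of the
IR constraints of consumers `x₂` and `x₃` binds. -/
theorem statement16 (V t H L x₁ x₂ x₃ l₁ l₂ l₃ : ℝ)
    (ht : 0 < t) (hL0 : 0 < L) (hLH : L < H) (hHL : H - L < 2 * t)
    (hV : 0 < V - t - H)
    (hx₁ : x₁ ∈ Ioo 0 (1 - (H - L) / (2 * t)))
    (hx₂ : 1 - (H - L) / (2 * t) < x₂) (hx₂₃ : x₂ < x₃) (hx₃ : x₃ < 1)
    (hl₁ : 0 < l₁) (hl₂ : 0 < l₂) (hl₃ : 0 < l₃)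
    (y₂ y₃ m₁ m₂ m₃ : ℝ)
    (hopt : Optimal3 V t H L x₁ x₂ x₃ l₁ l₂ l₃ y₂ y₃ m₁ m₂ m₃) :
    m₂ = U2 V t L x₂ y₂ ∨ m₃ = U2 V t L x₃ y₃ := by
  by_contra hcon
  push_neg at hcon
  obtain ⟨hne2, hne3⟩ := hcon
  obtain ⟨hfeas, hmax⟩ := hopt
  obtain ⟨hy₂, hy₃, h12, h13, h21, h23, h31, h32, hIR1, hIR2, hIR3, hOB⟩ := hfeas
  have hs2 : 0 < U2 V t L x₂ y₂ - m₂ := lt_of_le_of_ne hIR2 (by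
    intro h; exact hne2 (by linarith))
  have hs3 : 0 < U2 V t L x₃ y₃ - m₃ := lt_of_le_of_ne hIR3 (by
    intro h; exact hne3 (by linarith))
  set ε := min (U2 V t L x₂ y₂ - m₂) (U2 V t L x₃ y₃ - m₃) with hεdef
  have hεpos : 0 < ε := lt_min hs2 hs3
  have hε2 : ε ≤ U2 V t L x₂ y₂ - m₂ := min_le_left _ _
  have hε3 : ε ≤ U2 V t L x₃ y₃ - m₃ := min_le_right _ _
  have hx12 : x₁ < x₂ := lt_trans hx₁.2 hx₂
  have hx13 : x₁ < x₃ := lt_trans hx12 hx₂₃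
  have ht2 : x₁ * t < x₂ * t := mul_lt_mul_of_pos_right hx12 ht
  have ht3 : x₁ * t < x₃ * t := mul_lt_mul_of_pos_right hx13 ht
  rcases eq_or_lt_of_le hIR1 with h0 | h0
  · -- IR1 binds: raise m₂, m₃ by ε
    have hnew : Feasible3 V t H L x₁ x₂ x₃ l₁ l₂ l₃ y₂ y₃ m₁ (m₂ + ε) (m₃ + ε) :=
      ⟨hy₂, hy₃, by linarith, by linarith, by linarith, by linarith,
        by linarith, by linarith, hIR1, by linarith, by linarith, hOB⟩
    have := hmax y₂ y₃ m₁ (m₂ + ε) (m₃ + ε) hnew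
    nlinarith [mul_pos hl₂ hεpos, mul_pos hl₃ hεpos]
  · -- IR1 slack: raise all three by δ
    set δ := min ε ((V - x₁ * t - H) - m₁) with hδdef
    have hδpos : 0 < δ := lt_min hεpos h0
    have hδε : δ ≤ ε := min_le_left _ _
    have hδ1 : δ ≤ (V - x₁ * t - H) - m₁ := min_le_right _ _
    have hnew : Feasible3 V t H L x₁ x₂ x₃ l₁ l₂ l₃ y₂ y₃ (m₁ + δ) (m₂ + δ) (m₃ + δ) :=
      ⟨hy₂, hy₃, by linarith, by linarith, by linarith, by linarith,
        by linarith, by linarith, by linarith, by linarith, by linarith, hOB⟩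
    have := hmax y₂ y₃ (m₁ + δ) (m₂ + δ) (m₃ + δ) hnew
    nlinarith [mul_pos hl₁ hδpos, mul_pos hl₂ hδpos, mul_pos hl₃ hδpos]
end

section
/- Fix reals V, t, H, L with t > 0, 0 < L < H, H − L < 2t and V − t − H > 0; set x̲ = 1 − (H−L)/(2t); fix locations x₁ ∈ (0, x̲) and x̲ < x₂ < x₃ < 1 and weights λ₁, λ₂, λ₃ > 0. Then every optimal design (y₂, y₃, m₁, m₂, m₃) of the three-consumer problem satisfies the binding IC constraint from consumer x₁ to consumer x₂: U₁ − m₁ = U(1→2) − m₂. -/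
open Set

set_option maxHeartbeats 1000000 in
/-- In every optimal design of the three-consumer problem, the IC constraint
from consumer `x₁` to consumer `x₂` binds. -/
theorem statement17 (V t H L x₁ x₂ x₃ l₁ l₂ l₃ : ℝ)
    (ht : 0 < t) (hL0 : 0 < L) (hLH : L < H) (hHL : H - L < 2 * t)
    (hV : 0 < V - t - H)
    (hx₁ : x₁ ∈ Ioo 0 (1 - (H - L) / (2 * t)))
    (hx₂ : 1 - (H - L) / (2 * t) < x₂) (hx₂₃ : x₂ < x₃) (hx₃ : x₃ < 1)
    (hl₁ : 0 < l₁) (hl₂ : 0 < l₂) (hl₃ : 0 < l₃)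
    (y₂ y₃ m₁ m₂ m₃ : ℝ)
    (hopt : Optimal3 V t H L x₁ x₂ x₃ l₁ l₂ l₃ y₂ y₃ m₁ m₂ m₃) :
    (V - x₁ * t - H) - m₁ = W1 V t H L x₁ y₂ - m₂ := by
  obtain ⟨hfeas, hmax⟩ := hopt
  obtain ⟨hy₂, hy₃, h12, h13, h21, h23, h31, h32, hIR1, hIR2, hIR3, hOB⟩ := hfeas
  by_contra hne
  have hslack : W1 V t H L x₁ y₂ - m₂ < (V - x₁ * t - H) - m₁ :=
    lt_of_le_of_ne h12 (Ne.symm hne)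
  have h2t : 0 < 2 * t := by linarith
  have hc2K : 2 * t * (1 - x₂) < H - L := by
    have h1 : 1 - x₂ < (H - L) / (2 * t) := by linarith
    have h2 := (lt_div_iff₀ h2t).mp h1
    nlinarith
  simp only [U2, W1] at hslack h21 h23 h32 hIR2
  have hy2lt : y₂ < 1 := by nlinarith [hslack, h21, hc2K]
  have hgpos : (0:ℝ) < ((V - x₁ * t - H) - m₁) -
      ((y₂ * (V - x₁ * t - L) + (1 - y₂) * (V - x₁ * t - H)) - m₂) := by linarith
  set g := ((V - x₁ * t - H) - m₁) -
      ((y₂ * (V - x₁ * t - L) + (1 - y₂) * (V - x₁ * t - H)) - m₂) with hg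
  have hKc : 0 < H - L - 2 * t * (1 - x₂) := by linarith
  set d := min (g / (H - L - 2 * t * (1 - x₂))) (1 - y₂) with hd
  have hdpos : 0 < d := lt_min (div_pos hgpos hKc) (by linarith)
  have hd1 : d ≤ 1 - y₂ := min_le_right _ _
  have hd2 : d * (H - L - 2 * t * (1 - x₂)) ≤ g := by
    have h := min_le_left (g / (H - L - 2 * t * (1 - x₂))) (1 - y₂)
    calc d * (H - L - 2 * t * (1 - x₂))
        ≤ (g / (H - L - 2 * t * (1 - x₂))) * (H - L - 2 * t * (1 - x₂)) :=
          mul_le_mul_of_nonneg_right h hKc.le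
      _ = g := by field_simp
  have hfeas' : Feasible3 V t H L x₁ x₂ x₃ l₁ l₂ l₃ (y₂ + d) y₃ m₁
      (m₂ + 2 * t * (1 - x₂) * d) m₃ := by
    refine ⟨Set.mem_Icc.mpr ⟨by linarith [hy₂.1], by linarith⟩, hy₃,
      ?_, h13, ?_, ?_, h31, ?_, hIR1, ?_, hIR3, ?_⟩
    · simp only [W1]
      ring_nf
      ring_nf at hd2 hg hslack
      linarith
    · simp only [U2]
      ring_nf
      ring_nf at h21
      linarith
    · simp only [U2]
      ring_nf
      ring_nf at h23
      linarith
    · simp only [U2]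
      have h0 : 0 ≤ d * (2 * t * x₃ - 2 * t * x₂) := mul_nonneg hdpos.le (by nlinarith)
      ring_nf
      ring_nf at h32 h0
      linarith
    · simp only [U2]
      ring_nf
      ring_nf at hIR2
      linarith
    · have h0 : 0 ≤ l₂ * d * L := by positivity
      ring_nf
      ring_nf at hOB h0
      linarith
  have hrev := hmax (y₂ + d) y₃ m₁ (m₂ + 2 * t * (1 - x₂) * d) m₃ hfeas'
  have hpos : 0 < l₂ * (2 * t * (1 - x₂)) * d := by
    have : (0:ℝ) < 1 - x₂ := by linarith
    positivity
  ring_nf at hrev hpos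
  linarith
end

section
/- Fix reals V, t, H, L with t > 0, 0 < L < H, H − L < 2t and V − t − H > 0; set x̲ = 1 − (H−L)/(2t); fix locations x₁ ∈ (0, x̲) and x̲ < x₂ < x₃ < 1 and weights λ₁, λ₂, λ₃ > 0. If a design (y₂, y₃, m₁, m₂, m₃) of the three-consumer problem is feasible and the individual rationality constraint of consumer x₂ binds (m₂ = U₂), then λ₁·(H − L)/L ≥ λ₃/2. Equivalently, if λ₁·(H − L)/L < λ₃/2, then no feasible design has the x₂-IR constraint binding. -/
open Set

/-- If a feasible design of the three-consumer problem has the `x₂`-IR constraint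
binding, then `λ₁(H - L)/L ≥ λ₃/2`; equivalently, if `λ₁(H - L)/L < λ₃/2` then no
feasible design has the `x₂`-IR constraint binding. -/
theorem statement18 (V t H L x₁ x₂ x₃ l₁ l₂ l₃ : ℝ)
    (ht : 0 < t) (hL0 : 0 < L) (hLH : L < H) (hHL : H - L < 2 * t)
    (hV : 0 < V - t - H)
    (hx₁ : x₁ ∈ Ioo 0 (1 - (H - L) / (2 * t)))
    (hx₂ : 1 - (H - L) / (2 * t) < x₂) (hx₂₃ : x₂ < x₃) (hx₃ : x₃ < 1)
    (hl₁ : 0 < l₁) (hl₂ : 0 < l₂) (hl₃ : 0 < l₃)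
    (y₂ y₃ m₁ m₂ m₃ : ℝ)
    (hfeas : Feasible3 V t H L x₁ x₂ x₃ l₁ l₂ l₃ y₂ y₃ m₁ m₂ m₃)
    (hbind : m₂ = U2 V t L x₂ y₂) :
    l₁ * (H - L) / L ≥ l₃ / 2 := by
  obtain ⟨hy₂, hy₃, h12, h13, h21, h23, h31, h32, hIR1, hIR2, hIR3, hOB⟩ := hfeas
  -- IC 2→3 with IR₂ binding gives m₃ ≥ U2 x₂ y₃
  rw [hbind] at h23
  have hm₃ : m₃ ≥ U2 V t L x₂ y₃ := by linarith
  have hkey : U2 V t L x₃ y₃ ≥ U2 V t L x₂ y₃ := by linarith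
  have hy₃half : y₃ ≤ 1 / 2 := by
    unfold U2 at hkey
    nlinarith [mul_pos ht (sub_pos.mpr hx₂₃)]
  rw [ge_iff_le, le_div_iff₀ hL0]
  nlinarith [hy₂.2, mul_pos hl₂ hL0, mul_pos hl₃ hL0]
end
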